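/- arXiv:1409.2241 — 3 statements merged into one kernel-verified Lean document; each statement's English description precedes it below -/
import Mathlib

section
/- Let R be a real closed field whose value group Γ_R (of the standard real valuation) is divisible. Then there exists a section for R, i.e., a group homomorphism s : Γ_R → (R_{>0}, ·) with v_R(s(γ)) = γ for all γ ∈ Γ_R. -/
/-!
Since positive elements of a real closed field have `n`-th roots, and a root of a bounded unit
is again bounded, the group `G = U ∩ R_{>0}` of positive units that are bounded with bounded
inverse is divisible. A divisible abelian group is an injective `ℤ`-module, so `G` is a retract
of `R_{>0}`: there is `r : R_{>0} →* G` restricting to the identity on `G`. The map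
`u ↦ |u| / r |u|` then kills `U` and descends to the required section `Rˣ ⧸ U →* R_{>0}`.
-/

theorem Subgroup.exists_retraction_of_surjective_pow {G : Type*} [CommGroup G] (H : Subgroup G)
    (hH : ∀ n : ℕ, n ≠ 0 → Function.Surjective fun h : H => h ^ n) :
    ∃ r : G →* H, ∀ h : H, r h = h := by
  let : DivisibleBy (Additive H) ℕ := divisibleByOfSMulRightSurj _ _ fun hn => hH _ hn
  let : DivisibleBy (Additive H) ℤ := AddGroup.divisibleByIntOfDivisibleByNat _
  obtain ⟨r, hr⟩ := (Module.Baer.of_divisible (Additive H)).extension_property_addMonoidHom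
    (MonoidHom.toAdditive H.subtype) Subtype.val_injective (AddMonoidHom.id _)
  exact ⟨MonoidHom.toAdditive.symm r, DFunLike.congr_fun hr⟩

theorem QuotientGroup.exists_section_of_retraction {G : Type*} [CommGroup G] {N P : Subgroup G}
    (π : G →* P) (hπ : ∀ g, g⁻¹ * π g ∈ N)
    (r : P →* N.subgroupOf P) (hr : ∀ h : N.subgroupOf P, r h = h) :
    ∃ s : G ⧸ N →* G, (∀ γ, s γ ∈ P) ∧ ∀ γ, (s γ : G ⧸ N) = γ := by
  set ψ : G →* P := (MonoidHom.id P / (N.subgroupOf P).subtype.comp r).comp π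
  set φ : G →* G := P.subtype.comp ψ
  have hφ : ∀ g, φ g = π g / (r (π g) : P) := fun g => rfl
  have hφN : ∀ g, g⁻¹ * φ g ∈ N := fun g => by
    rw [hφ, mul_div_assoc']
    exact N.div_mem (hπ g) (r (π g)).2
  have hker : N ≤ φ.ker := fun n hn => by
    have hπn : π n ∈ N.subgroupOf P := by
      simpa [Subgroup.mem_subgroupOf] using N.mul_mem hn (hπ n)
    rw [MonoidHom.mem_ker, hφ, show r (π n) = ⟨π n, hπn⟩ from hr ⟨π n, hπn⟩, div_self']
  refine ⟨QuotientGroup.lift N φ hker, ?_, ?_⟩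
  · rintro ⟨g⟩
    exact (ψ g).2
  · rintro ⟨g⟩
    exact ((QuotientGroup.eq).2 (hφN g)).symm

namespace Units

variable (R : Type*) [Field R] [LinearOrder R] [IsStrictOrderedRing R]

def absPos : Rˣ →* posSubgroup R :=
  (map (absHom : R →*₀ R).toMonoidHom).codRestrict _ fun u =>
    (mem_posSubgroup _).2 (abs_pos.2 u.ne_zero)

variable {R}

@[simp]
theorem val_absPos (u : Rˣ) : ((absPos R u : Rˣ) : R) = |(u : R)| := rfl

theorem inv_mul_absPos_eq_one_or_neg_one (u : Rˣ) :
    u⁻¹ * absPos R u = 1 ∨ u⁻¹ * absPos R u = -1 := by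
  have hu : (u : R) ≠ 0 := u.ne_zero
  rcases lt_or_gt_of_ne hu with h | h
  · right; ext; simp [abs_of_neg h, hu]
  · left; ext; simp [abs_of_pos h, hu]

end Units

section

variable {R : Type*} [Field R] [LinearOrder R] [IsStrictOrderedRing R]

theorem IsRealClosed.exists_pos_pow_eq [IsRealClosed R] {x : R} (hx : 0 < x) {n : ℕ}
    (hn : n ≠ 0) :
    ∃ y, 0 < y ∧ y ^ n = x := by
  obtain ⟨y, rfl⟩ := IsRealClosed.exists_eq_pow_of_nonneg hx.le hn
  refine ⟨|y|, abs_pos.2 fun hy => hx.ne' ?_, by rw [pow_abs, abs_of_pos hx]⟩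
  simp [hy, hn]

theorem exists_nat_bounds_of_pow {x : R} (hx : 0 < x) {n : ℕ} (hn : n ≠ 0)
    (h : ∃ N : ℕ, -(N : R) ≤ x ^ n ∧ x ^ n ≤ N) : ∃ N : ℕ, -(N : R) ≤ x ∧ x ≤ N := by
  obtain ⟨N, -, hN⟩ := h
  refine ⟨N + 1, by push_cast; linarith [(N.cast_nonneg : (0 : R) ≤ N)], ?_⟩
  push_cast
  rcases le_total x 1 with h1 | h1
  · linarith [(N.cast_nonneg : (0 : R) ≤ N)]
  · linarith [le_self_pow₀ h1 hn]

variable {U : Subgroup Rˣ}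
  (hU : ∀ u : Rˣ, u ∈ U ↔
    ((∃ n : ℕ, -(n : R) ≤ (u : R) ∧ (u : R) ≤ n) ∧
     (∃ n : ℕ, -(n : R) ≤ ((u⁻¹ : Rˣ) : R) ∧ ((u⁻¹ : Rˣ) : R) ≤ n)))
include hU

namespace BoundedUnits

theorem neg_one_mem : (-1 : Rˣ) ∈ U :=
  (hU _).2 ⟨⟨1, by simp⟩, ⟨1, by simp⟩⟩

theorem mem_of_pow_mem {u : Rˣ} (hu : 0 < (u : R)) {n : ℕ} (hn : n ≠ 0)
    (h : u ^ n ∈ U) : u ∈ U := by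
  rw [hU] at h ⊢
  simp only [Units.val_pow_eq_pow_val, ← inv_pow, Units.val_inv_eq_inv_val] at h ⊢
  exact ⟨exists_nat_bounds_of_pow hu hn h.1, exists_nat_bounds_of_pow (inv_pos.2 hu) hn h.2⟩

theorem surjective_pow_subgroupOf_posSubgroup [IsRealClosed R] {n : ℕ} (hn : n ≠ 0) :
    Function.Surjective fun a : U.subgroupOf (Units.posSubgroup R) => a ^ n := by
  rintro ⟨⟨u, hu⟩, huU⟩
  rw [Units.mem_posSubgroup] at hu
  obtain ⟨y, hy, hyu⟩ := IsRealClosed.exists_pos_pow_eq hu hn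
  have hvu : Units.mk0 y hy.ne' ^ n = u := Units.ext (by simp [hyu])
  have hvU : Units.mk0 y hy.ne' ∈ U :=
    mem_of_pow_mem hU hy hn (hvu ▸ Subgroup.mem_subgroupOf.1 huU)
  exact ⟨⟨⟨_, (Units.mem_posSubgroup _).2 hy⟩, Subgroup.mem_subgroupOf.2 hvU⟩,
    Subtype.ext (Subtype.ext hvu)⟩

end BoundedUnits

end

theorem stmt_8_general (R : Type*) [Field R] [LinearOrder R] [IsStrictOrderedRing R]
    (hsq : ∀ x : R, 0 ≤ x → ∃ y : R, y ^ 2 = x)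
    (hodd : ∀ p : Polynomial R, Odd p.natDegree → ∃ x : R, p.eval x = 0)
    (U : Subgroup Rˣ)
    (hU : ∀ u : Rˣ, u ∈ U ↔
      ((∃ n : ℕ, -(n : R) ≤ (u : R) ∧ (u : R) ≤ n) ∧
       (∃ n : ℕ, -(n : R) ≤ ((u⁻¹ : Rˣ) : R) ∧ ((u⁻¹ : Rˣ) : R) ≤ n))) :
    ∃ s : (Rˣ ⧸ U) →* Rˣ,
      (∀ γ : Rˣ ⧸ U, 0 < ((s γ : Rˣ) : R)) ∧
      (∀ γ : Rˣ ⧸ U, (QuotientGroup.mk (s γ) : Rˣ ⧸ U) = γ) := by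
  have : IsRealClosed R := .of_linearOrderedField
    (fun hx => let ⟨y, hy⟩ := hsq _ hx; ⟨y, by rw [← hy, sq]⟩) (fun hf => hodd _ hf)
  obtain ⟨r, hr⟩ := (U.subgroupOf (Units.posSubgroup R)).exists_retraction_of_surjective_pow
    fun _ hn => BoundedUnits.surjective_pow_subgroupOf_posSubgroup hU hn
  have habs (u : Rˣ) : u⁻¹ * Units.absPos R u ∈ U := by
    rcases Units.inv_mul_absPos_eq_one_or_neg_one u with h | h <;> rw [h]
    exacts [U.one_mem, BoundedUnits.neg_one_mem hU]
  obtain ⟨s, hsP, hs⟩ := QuotientGroup.exists_section_of_retraction _ habs r hr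
  exact ⟨s, fun γ => (Units.mem_posSubgroup _).1 (hsP γ), hs⟩

/-- Let `R` be a real closed field whose value group `Γ_R = Rˣ / O_Rˣ` (the
quotient of the units by the subgroup `U` of bounded units with bounded
inverse) is divisible. Then there exists a section for `R`: a group
homomorphism `s` from the value group to the multiplicative group of positive
elements of `R` with `v_R (s γ) = γ` for all `γ`. -/
theorem stmt_8 (R : Type*) [Field R] [LinearOrder R] [IsStrictOrderedRing R]
    (hsq : ∀ x : R, 0 ≤ x → ∃ y : R, y ^ 2 = x)
    (hodd : ∀ p : Polynomial R, Odd p.natDegree → ∃ x : R, p.eval x = 0)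
    (U : Subgroup Rˣ)
    (hU : ∀ u : Rˣ, u ∈ U ↔
      ((∃ n : ℕ, -(n : R) ≤ (u : R) ∧ (u : R) ≤ n) ∧
       (∃ n : ℕ, -(n : R) ≤ ((u⁻¹ : Rˣ) : R) ∧ ((u⁻¹ : Rˣ) : R) ≤ n)))
    (hdiv : ∀ γ : Rˣ ⧸ U, ∀ n : ℕ, 1 ≤ n → ∃ δ : Rˣ ⧸ U, δ ^ n = γ) :
    ∃ s : (Rˣ ⧸ U) →* Rˣ,
      (∀ γ : Rˣ ⧸ U, 0 < ((s γ : Rˣ) : R)) ∧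
      (∀ γ : Rˣ ⧸ U, (QuotientGroup.mk (s γ) : Rˣ ⧸ U) = γ) :=
  stmt_8_general R hsq hodd U hU
end

section
/- Let Γ be a divisible ordered abelian group and 𝓡 = ℝ((t^Γ)). The logarithmic series L(x) = Σ_{j≥1} (-1)^{j+1} x^j / j converges (i.e., is a well-defined Hahn series) when evaluated at any infinitesimal h ∈ m_𝓡, and the map log : ℝ_{>0} + m_𝓡 → O_𝓡 defined by log(a(1+h)) = log(a) + L(h) is a group isomorphism from the multiplicative group of positive units of O_𝓡 onto the additive group (O_𝓡, +), extending the real logarithm. -/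
/-!
Logarithm and exponential of infinitesimals are obtained by evaluating formal power series at a
series of positive order (`PowerSeries.heval`, an algebra map `R⟦X⟧ → R⟦Γ⟧`). Evaluation commutes
with substitution, so the formal identities `log (1 + (exp X - 1)) = X` and
`exp (log (1 + X)) - 1 = X`, both checked by differentiating, make `L h = log (1 + h)` and
`E y = exp y - 1` mutually inverse bijections of the maximal ideal `m`. Regrouping the double
series `exp x * exp y` along antidiagonals gives `1 + E (x + y) = (1 + E x) (1 + E y)`, hence
`L ((1 + h) (1 + k) - 1) = L h + L k`. Finally every positive unit is uniquely `a (1 + h)` with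
`0 < a` real and `h ∈ m`, and `O = ℝ ⊕ m`.
-/

open Finset PowerSeries HahnSeries.SummableFamily

namespace PowerSeries

theorem coeff_pow_eq_zero_of_lt {R : Type*} [CommSemiring R] {g : R⟦X⟧} (hg : constantCoeff g = 0)
    {n d : ℕ} (h : n < d) : coeff n (g ^ d) = 0 :=
  X_pow_dvd_iff.1 (pow_dvd_pow_of_dvd (X_dvd_iff.2 hg) d) n h

variable {A : Type*} [CommRing A] [Algebra ℚ A]

theorem coeff_succ_log (n : ℕ) :
    coeff (n + 1) (log A) = algebraMap ℚ A ((-1) ^ n / (n + 1)) := by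
  simp [pow_succ]

theorem constantCoeff_exp_sub_one : constantCoeff (exp A - 1) = 0 := by
  simp [constantCoeff_exp]

theorem one_add_X_mul_derivative_log : (1 + X) * d⁄dX A (log A) = 1 := by
  ext (_ | n)
  · simp [deriv_log]
  · simp [deriv_log, add_mul, pow_succ]

theorem derivative_derivative_log : d⁄dX A (d⁄dX A (log A)) = -d⁄dX A (log A) ^ 2 := by
  have hG := one_add_X_mul_derivative_log (A := A)
  have h := congrArg (d⁄dX A) hG
  simp only [Derivation.leibniz, map_add, derivative_X, Derivation.map_one_eq_zero,
    smul_eq_mul] at h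
  linear_combination d⁄dX A (log A) * h - d⁄dX A (d⁄dX A (log A)) * hG

theorem log_subst_exp_sub_one : (log A).subst (exp A - 1) = X := by
  have := IsAddTorsionFree.of_module_rat A
  have hE : HasSubst (exp A - 1) := HasSubst.exp_sub_one
  have hinv : exp A * (d⁄dX A (log A)).subst (exp A - 1) = 1 := by
    have h := congrArg (substAlgHom hE) (one_add_X_mul_derivative_log (A := A))
    rwa [map_mul, map_add, map_one, substAlgHom_X, add_sub_cancel, coe_substAlgHom] at h
  apply derivative.ext
  · rw [derivative_subst hE, map_sub, derivative_exp, derivative_one, sub_zero, derivative_X,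
      mul_comm, hinv]
  · rw [constantCoeff_X]
    exact constantCoeff_subst_eq_zero constantCoeff_exp_sub_one _ constantCoeff_log

theorem exp_sub_one_subst_log : (exp A - 1).subst (log A) = X := by
  have := IsAddTorsionFree.of_module_rat A
  have hL : HasSubst (log A) := HasSubst.log
  set w : A⟦X⟧ := (exp A).subst (log A)
  set G := d⁄dX A (log A)
  have hG : (1 + X) * G = 1 := one_add_X_mul_derivative_log
  have hw : d⁄dX A w = w * G := by rw [derivative_subst hL, derivative_exp]
  have hsub : (exp A - 1).subst (log A) = w - 1 := by
    rw [← coe_substAlgHom hL, map_sub, map_one, coe_substAlgHom]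
  have hw1 : constantCoeff w = 1 := by
    have h := constantCoeff_subst_eq_zero (constantCoeff_log (A := A)) (exp A - 1)
      constantCoeff_exp_sub_one
    rwa [hsub, map_sub, map_one, sub_eq_zero] at h
  have hG1 : constantCoeff G = 1 := by
    simpa using congrArg constantCoeff hG
  -- `w' = w / (1 + X)`, so `w / (1 + X) = w * G` is constant.
  have hwG : w * G = 1 := by
    apply derivative.ext
    · rw [Derivation.leibniz, hw, derivative_derivative_log, Derivation.map_one_eq_zero, smul_eq_mul, smul_eq_mul]
      ring
    · rw [map_mul, hw1, hG1, map_one, mul_one]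
  rw [hsub]
  linear_combination (1 + X) * hwG - w * hG

end PowerSeries

namespace HahnSeries

section Order

variable {Γ R : Type*} [Zero Γ] [LinearOrder Γ]

theorem zero_lt_orderTop_iff_forall_mem_support [Zero R] {x : HahnSeries Γ R} :
    0 < x.orderTop ↔ ∀ γ ∈ x.support, 0 < γ := by
  refine ⟨fun h γ hγ => WithTop.coe_pos.1 (h.trans_le (orderTop_le_of_coeff_ne_zero hγ)),
    fun h => ?_⟩
  rcases eq_or_ne x 0 with rfl | hx
  · simp
  · rw [orderTop_of_ne_zero hx]
    exact WithTop.coe_pos.2 (h _ (x.isWF_support.min_mem (support_nonempty_iff.2 hx)))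

theorem zero_lt_orderTop_add [AddMonoid R] {x y : R⟦Γ⟧} (hx : 0 < x.orderTop)
    (hy : 0 < y.orderTop) : 0 < (x + y).orderTop :=
  (lt_min hx hy).trans_le min_orderTop_le_orderTop_add

end Order

variable {Γ : Type*} [AddCommMonoid Γ] [LinearOrder Γ] [IsOrderedCancelAddMonoid Γ]

theorem zero_lt_orderTop_mul {R : Type*} [Ring R] {x y : R⟦Γ⟧} (hx : 0 < x.orderTop)
    (hy : 0 < y.orderTop) : 0 < (x * y).orderTop :=
  (hx.trans_le (le_add_of_nonneg_right hy.le)).trans_le orderTop_add_le_mul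

theorem exists_coeff_pow_eq_zero {R : Type*} [CommRing R] {x : R⟦Γ⟧} (hx : 0 < x.orderTop)
    (γ : Γ) : ∃ K, ∀ n ≥ K, (x ^ n).coeff γ = 0 := by
  obtain ⟨M, hM⟩ := (pow_finite_co_support hx γ).bddAbove
  exact ⟨M + 1, fun n hn => by_contra fun h => absurd (hM h) (by omega)⟩

end HahnSeries

namespace HahnSeries.SummableFamily

variable {Γ R A : Type*} [PartialOrder Γ] [AddCommMonoid R] [AddCommMonoid A] [HasAntidiagonal A]

theorem exists_mem_antidiagonal_coeff_ne_zero {s : A × A → HahnSeries Γ R} {n : A} {γ : Γ}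
    (h : (∑ p ∈ antidiagonal n, s p).coeff γ ≠ 0) : ∃ p ∈ antidiagonal n, (s p).coeff γ ≠ 0 :=
  exists_ne_zero_of_sum_ne_zero (by rwa [← HahnSeries.coeff_sum])

def sumAntidiagonal (s : SummableFamily Γ R (A × A)) : SummableFamily Γ R A where
  toFun n := ∑ p ∈ antidiagonal n, s p
  isPWO_iUnion_support' := s.isPWO_iUnion_support.mono <| Set.iUnion_subset fun _ _ hγ =>
    have ⟨p, _, hp⟩ := exists_mem_antidiagonal_coeff_ne_zero hγ
    Set.mem_iUnion.2 ⟨p, hp⟩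
  finite_co_support' γ := ((s.finite_co_support γ).image fun p => p.1 + p.2).subset fun _ hn =>
    have ⟨p, hpn, hp⟩ := exists_mem_antidiagonal_coeff_ne_zero hn
    ⟨p, hp, HasAntidiagonal.mem_antidiagonal.1 hpn⟩

@[simp]
theorem sumAntidiagonal_apply (s : SummableFamily Γ R (A × A)) (n : A) :
    s.sumAntidiagonal n = ∑ p ∈ antidiagonal n, s p :=
  rfl

theorem hsum_sumAntidiagonal [DecidableEq A] (s : SummableFamily Γ R (A × A)) :
    s.sumAntidiagonal.hsum = s.hsum := by
  ext γ
  set T := (s.finite_co_support γ).toFinset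
  have hT : ∀ p, p ∉ T → (s p).coeff γ = 0 := fun p hp => not_not.1 fun h =>
    hp ((Set.Finite.mem_toFinset _).2 h)
  have hfiber : ∀ n, ∑ p ∈ antidiagonal n, (s p).coeff γ =
      ∑ p ∈ T with p.1 + p.2 = n, (s p).coeff γ := fun n =>
    (sum_subset (fun p hp => HasAntidiagonal.mem_antidiagonal.2 (mem_filter.1 hp).2)
      fun p hpn hp => hT p fun hpT => hp (mem_filter.2 ⟨hpT,
        HasAntidiagonal.mem_antidiagonal.1 hpn⟩)).symm
  rw [coeff_hsum, coeff_hsum,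
    finsum_eq_sum_of_support_subset _ (s := T) fun p hp => (Set.Finite.mem_toFinset _).2 hp,
    finsum_eq_sum_of_support_subset _ (s := T.image fun p => p.1 + p.2) fun n hn => ?_]
  · simp only [sumAntidiagonal_apply, HahnSeries.coeff_sum, hfiber]
    exact sum_fiberwise_of_maps_to (fun p hp => mem_image_of_mem _ hp) _
  · have ⟨p, hpn, hp⟩ := exists_mem_antidiagonal_coeff_ne_zero hn
    exact mem_image.2 ⟨p, (Set.Finite.mem_toFinset _).2 hp, HasAntidiagonal.mem_antidiagonal.1 hpn⟩

end HahnSeries.SummableFamily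

namespace PowerSeries

variable {Γ R : Type*} [AddCommMonoid Γ] [LinearOrder Γ] [IsOrderedCancelAddMonoid Γ] [CommRing R]
  {x : HahnSeries Γ R}

theorem coeff_heval_eq_sum (hx : 0 < x.orderTop) {γ : Γ} {K : ℕ}
    (hK : ∀ n ≥ K, (x ^ n).coeff γ = 0) (f : R⟦X⟧) :
    (heval x f).coeff γ = ∑ n ∈ range K, coeff n f * (x ^ n).coeff γ := by
  rw [coeff_heval]
  refine (finsum_eq_sum_of_support_subset _ fun n hn => ?_).trans
    (sum_congr rfl fun n _ => by simp [powerSeriesFamily_of_orderTop_pos hx])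
  refine mem_coe.2 (mem_range.2 (not_le.1 fun h => hn ?_))
  simp [powerSeriesFamily_of_orderTop_pos hx, hK n h]

theorem zero_lt_orderTop_heval (hx : 0 < x.orderTop) {f : R⟦X⟧} (hf : constantCoeff f = 0) :
    0 < (heval x f).orderTop := by
  refine HahnSeries.zero_lt_orderTop_iff_forall_mem_support.2 fun γ hγ => ?_
  rw [heval_apply] at hγ
  obtain ⟨n, hn⟩ := Set.mem_iUnion.1 (support_hsum_subset hγ)
  rw [powerSeriesFamily_of_orderTop_pos hx, HahnSeries.mem_support, HahnSeries.coeff_smul] at hn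
  rcases n with _ | n
  · simp [hf] at hn
  · have hxn : 0 < (x ^ (n + 1)).orderTop :=
      ((nsmul_pos_iff n.succ_ne_zero).2 hx).trans_le HahnSeries.orderTop_nsmul_le_orderTop_pow
    exact WithTop.coe_pos.1
      (hxn.trans_le (HahnSeries.orderTop_le_of_coeff_ne_zero (right_ne_zero_of_smul hn)))

theorem heval_subst (hx : 0 < x.orderTop) {g : R⟦X⟧} (hg : constantCoeff g = 0) (f : R⟦X⟧) :
    heval x (f.subst g) = heval (heval x g) f := by
  ext γ
  obtain ⟨K, hK⟩ := HahnSeries.exists_coeff_pow_eq_zero hx γ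
  have hgK : ∀ d ≥ K, ((heval x g) ^ d).coeff γ = 0 := fun d hd => by
    rw [← map_pow, coeff_heval_eq_sum hx hK]
    exact sum_eq_zero fun n hn => by
      rw [coeff_pow_eq_zero_of_lt hg (by simp at hn; omega), zero_mul]
  have hsubst : ∀ n < K, coeff n (f.subst g) = ∑ d ∈ range K, coeff d f * coeff n (g ^ d) := by
    intro n hn
    rw [coeff_subst' (HasSubst.of_constantCoeff_zero' hg)]
    refine finsum_eq_sum_of_support_subset _ fun d hd =>
      mem_coe.2 (mem_range.2 (not_le.1 fun h => hd ?_))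
    simp only [coeff_pow_eq_zero_of_lt hg (show n < d by omega), smul_zero]
  -- both sides are the double sum `∑ n < K, ∑ d < K, f_d * (g ^ d)_n * (x ^ n)_γ`
  rw [coeff_heval_eq_sum hx hK, coeff_heval_eq_sum (zero_lt_orderTop_heval hx hg) hgK]
  simp_rw [← map_pow, coeff_heval_eq_sum hx hK, mul_sum]
  rw [sum_comm]
  refine sum_congr rfl fun n hn => ?_
  rw [hsubst n (by simpa using hn), sum_mul]
  exact sum_congr rfl fun d _ => by ring

theorem heval_add_exp [Algebra ℚ R] {y : HahnSeries Γ R} (hx : 0 < x.orderTop)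
    (hy : 0 < y.orderTop) : heval (x + y) (exp R) = heval x (exp R) * heval y (exp R) := by
  have hxy := HahnSeries.zero_lt_orderTop_add hx hy
  rw [heval_apply, heval_apply, heval_apply, ← hsum_mul, ← hsum_sumAntidiagonal]
  congr 1
  ext1 n
  -- the `n`-th coefficient of `exp (x X) * exp (y X) = exp ((x + y) X)` over `R⟦Γ⟧`
  have h := congrArg (coeff n) (exp_mul_exp_eq_exp_add x y)
  simp only [coeff_mul, coeff_rescale, coeff_exp, mul_comm _ (algebraMap ℚ _ _),
    ← Algebra.smul_def] at h
  simpa [hx, hy, hxy, smul_mul_smul_comm] using h.symm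

end PowerSeries

namespace HahnSeries

variable {Γ : Type*} [AddCommMonoid Γ] [LinearOrder Γ] [IsOrderedCancelAddMonoid Γ]

section LogOneAdd

variable {R : Type*} [CommRing R] [Algebra ℚ R]

noncomputable def logOneAdd (h : R⟦Γ⟧) : R⟦Γ⟧ := heval h (log R)

noncomputable def expSubOne (y : R⟦Γ⟧) : R⟦Γ⟧ := heval y (exp R - 1)

theorem zero_lt_orderTop_logOneAdd {h : R⟦Γ⟧} (hh : 0 < h.orderTop) :
    0 < (logOneAdd h).orderTop :=
  zero_lt_orderTop_heval hh constantCoeff_log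

theorem zero_lt_orderTop_expSubOne {y : R⟦Γ⟧} (hy : 0 < y.orderTop) :
    0 < (expSubOne y).orderTop :=
  zero_lt_orderTop_heval hy constantCoeff_exp_sub_one

@[simp]
theorem logOneAdd_zero : logOneAdd (0 : R⟦Γ⟧) = 0 := by
  simp [logOneAdd, powerSeriesFamily_hsum_zero]

theorem logOneAdd_expSubOne {y : R⟦Γ⟧} (hy : 0 < y.orderTop) : logOneAdd (expSubOne y) = y := by
  rw [logOneAdd, expSubOne, ← heval_subst hy constantCoeff_exp_sub_one, log_subst_exp_sub_one,
    heval_X _ hy]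

theorem expSubOne_logOneAdd {h : R⟦Γ⟧} (hh : 0 < h.orderTop) : expSubOne (logOneAdd h) = h := by
  rw [logOneAdd, expSubOne, ← heval_subst hh constantCoeff_log, exp_sub_one_subst_log,
    heval_X _ hh]

theorem logOneAdd_inj {h k : R⟦Γ⟧} (hh : 0 < h.orderTop) (hk : 0 < k.orderTop) :
    logOneAdd h = logOneAdd k ↔ h = k :=
  ⟨fun hhk => by rw [← expSubOne_logOneAdd hh, hhk, expSubOne_logOneAdd hk], congrArg _⟩

theorem expSubOne_add {x y : R⟦Γ⟧} (hx : 0 < x.orderTop) (hy : 0 < y.orderTop) :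
    expSubOne (x + y) = expSubOne x + expSubOne y + expSubOne x * expSubOne y := by
  simp only [expSubOne, map_sub, map_one, heval_add_exp hx hy]
  ring

theorem logOneAdd_add_add_mul {h k : R⟦Γ⟧} (hh : 0 < h.orderTop) (hk : 0 < k.orderTop) :
    logOneAdd (h + k + h * k) = logOneAdd h + logOneAdd k := by
  have hL := zero_lt_orderTop_logOneAdd hh
  have hK := zero_lt_orderTop_logOneAdd hk
  rw [← logOneAdd_expSubOne (zero_lt_orderTop_add hL hK), expSubOne_add hL hK,
    expSubOne_logOneAdd hh, expSubOne_logOneAdd hk]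

noncomputable def logFamily (h : R⟦Γ⟧) : SummableFamily Γ R ℕ :=
  smulFamily (fun j => PowerSeries.coeff (j + 1) (log R)) (h • powers h)

theorem logFamily_apply {h : R⟦Γ⟧} (hh : 0 < h.orderTop) (j : ℕ) :
    logFamily h j = PowerSeries.coeff (j + 1) (log R) • h ^ (j + 1) := by
  rw [logFamily, smulFamily_toFun, SummableFamily.smul_apply, of_symm_smul_of_eq_mul,
    powers_of_orderTop_pos hh, pow_succ']

theorem hsum_logFamily {h : R⟦Γ⟧} (hh : 0 < h.orderTop) : (logFamily h).hsum = logOneAdd h := by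
  rw [logOneAdd, heval_apply, ← hsum_embDomain (logFamily h) ⟨Nat.succ, Nat.succ_injective⟩]
  congr 1
  ext1 (_ | j)
  · rw [SummableFamily.embDomain_of_notMem_range _ _ fun ⟨_, h0⟩ => Nat.succ_ne_zero _ h0]
    simp [hh]
  · rw [show j + 1 = (⟨Nat.succ, Nat.succ_injective⟩ : ℕ ↪ ℕ) j from rfl,
      SummableFamily.embDomain_image, logFamily_apply hh, powerSeriesFamily_of_orderTop_pos hh]
    rfl

end LogOneAdd

section ConstantTerm

variable {R : Type*} [Ring R]

theorem coeff_zero_C_add {a : R} {h : R⟦Γ⟧} (hh : 0 < h.orderTop) : (C a + h).coeff 0 = a := by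
  rw [coeff_add, C_apply, coeff_single_same, coeff_eq_zero_of_lt_orderTop hh, add_zero]

theorem zero_le_of_mem_support_C_add {a : R} {h : R⟦Γ⟧} (hh : 0 < h.orderTop) {γ : Γ}
    (hγ : γ ∈ (C a + h).support) : 0 ≤ γ := by
  rcases eq_or_ne γ 0 with rfl | hγ0
  · exact le_rfl
  · refine (zero_lt_orderTop_iff_forall_mem_support.1 hh γ ?_).le
    simpa [C_apply, coeff_single_of_ne hγ0] using hγ

theorem zero_lt_orderTop_sub_C_coeff_zero {g : R⟦Γ⟧} (hg : ∀ γ ∈ g.support, 0 ≤ γ) :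
    0 < (g - C (g.coeff 0)).orderTop := by
  refine zero_lt_orderTop_iff_forall_mem_support.2 fun γ hγ => ?_
  rcases eq_or_ne γ 0 with rfl | hγ0
  · simp [C_apply] at hγ
  · refine (hg γ ?_).lt_of_ne' hγ0
    simpa [C_apply, coeff_single_of_ne hγ0] using hγ

end ConstantTerm

theorem C_add_eq_C_mul_one_add {K : Type*} [Field K] {a : K} (ha : a ≠ 0) (h : K⟦Γ⟧) :
    C a + h = C a * (1 + a⁻¹ • h) := by
  rw [mul_add, mul_one, C_mul_eq_smul, smul_smul, mul_inv_cancel₀ ha, one_smul]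

noncomputable def logPosUnit (f : HahnSeries Γ ℝ) : HahnSeries Γ ℝ :=
  C (Real.log (f.coeff 0)) + logOneAdd ((f.coeff 0)⁻¹ • f - 1)

theorem logPosUnit_C_mul_one_add {a : ℝ} (ha : a ≠ 0) {h : HahnSeries Γ ℝ}
    (hh : 0 < h.orderTop) : logPosUnit (C a * (1 + h)) = C (Real.log a) + logOneAdd h := by
  have hf : C a * (1 + h) = C a + a • h := by rw [mul_add, mul_one, C_mul_eq_smul]
  have hh' : 0 < (a • h).orderTop := hh.trans_le (orderTop_le_orderTop_smul a h)
  rw [logPosUnit, hf, coeff_zero_C_add hh', ← hf, ← C_mul_eq_smul, ← mul_assoc, ← map_mul,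
    inv_mul_cancel₀ ha, map_one, one_mul, add_sub_cancel_left]

theorem exists_eq_C_mul_one_add {f : HahnSeries Γ ℝ}
    (hf : ∃ a h, 0 < a ∧ (∀ γ ∈ h.support, 0 < γ) ∧ f = C a + h) :
    ∃ a h, 0 < a ∧ 0 < h.orderTop ∧ f = C a * (1 + h) := by
  obtain ⟨a, h, ha, hh, rfl⟩ := hf
  exact ⟨a, a⁻¹ • h, ha, (zero_lt_orderTop_iff_forall_mem_support.2 hh).trans_le
    (orderTop_le_orderTop_smul _ h), C_add_eq_C_mul_one_add ha.ne' h⟩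

theorem logPosUnit_mul {f g : HahnSeries Γ ℝ}
    (hf : ∃ a h, 0 < a ∧ (∀ γ ∈ h.support, 0 < γ) ∧ f = C a + h)
    (hg : ∃ a h, 0 < a ∧ (∀ γ ∈ h.support, 0 < γ) ∧ g = C a + h) :
    logPosUnit (f * g) = logPosUnit f + logPosUnit g := by
  obtain ⟨a, h, ha, hh, rfl⟩ := exists_eq_C_mul_one_add hf
  obtain ⟨b, k, hb, hk, rfl⟩ := exists_eq_C_mul_one_add hg
  have hprod : C a * (1 + h) * (C b * (1 + k)) = C (a * b) * (1 + (h + k + h * k)) := by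
    rw [map_mul]
    ring
  have hhk := zero_lt_orderTop_add (zero_lt_orderTop_add hh hk) (zero_lt_orderTop_mul hh hk)
  rw [hprod, logPosUnit_C_mul_one_add (mul_ne_zero ha.ne' hb.ne') hhk,
    logPosUnit_C_mul_one_add ha.ne' hh, logPosUnit_C_mul_one_add hb.ne' hk,
    logOneAdd_add_add_mul hh hk, Real.log_mul ha.ne' hb.ne', map_add]
  abel

theorem bijOn_logPosUnit :
    Set.BijOn logPosUnit
      {f : HahnSeries Γ ℝ | ∃ a h, 0 < a ∧ (∀ γ ∈ h.support, 0 < γ) ∧ f = C a + h}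
      {g : HahnSeries Γ ℝ | ∀ γ ∈ g.support, 0 ≤ γ} := by
  refine ⟨fun f hf => ?_, fun f hf f' hf' hff' => ?_, fun g hg => ?_⟩
  · obtain ⟨a, h, ha, hh, rfl⟩ := exists_eq_C_mul_one_add hf
    rw [Set.mem_ofPred_eq, logPosUnit_C_mul_one_add ha.ne' hh]
    exact fun γ => zero_le_of_mem_support_C_add (zero_lt_orderTop_logOneAdd hh)
  · obtain ⟨a, h, ha, hh, rfl⟩ := exists_eq_C_mul_one_add hf
    obtain ⟨b, k, hb, hk, rfl⟩ := exists_eq_C_mul_one_add hf'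
    rw [logPosUnit_C_mul_one_add ha.ne' hh, logPosUnit_C_mul_one_add hb.ne' hk] at hff'
    have hab : a = b := by
      have h0 := congrArg (coeff · 0) hff'
      simp only [coeff_zero_C_add (zero_lt_orderTop_logOneAdd hh),
        coeff_zero_C_add (zero_lt_orderTop_logOneAdd hk)] at h0
      exact Real.log_injOn_pos ha hb h0
    subst hab
    rw [(logOneAdd_inj hh hk).1 (add_left_cancel hff')]
  · set k := g - C (g.coeff 0)
    have hk : 0 < k.orderTop := zero_lt_orderTop_sub_C_coeff_zero hg
    have hE := zero_lt_orderTop_expSubOne hk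
    refine ⟨C (Real.exp (g.coeff 0)) * (1 + expSubOne k), ⟨Real.exp (g.coeff 0),
      Real.exp (g.coeff 0) • expSubOne k, Real.exp_pos _, zero_lt_orderTop_iff_forall_mem_support.1
        (hE.trans_le (orderTop_le_orderTop_smul _ _)), by rw [mul_add, mul_one, C_mul_eq_smul]⟩, ?_⟩
    rw [logPosUnit_C_mul_one_add (Real.exp_ne_zero _) hE, Real.log_exp, logOneAdd_expSubOne hk,
      add_sub_cancel]

end HahnSeries

theorem stmt_12_general (Γ : Type*) [AddCommGroup Γ] [LinearOrder Γ] [IsOrderedAddMonoid Γ] :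
    ∃ L log : HahnSeries Γ ℝ → HahnSeries Γ ℝ,
      -- the logarithmic series is summable at infinitesimal arguments and `L`
      -- is its sum: the `j`-th term (for `j ≥ 1`, here indexed by `j+1`) is
      -- `((-1)^(j+1)/j) • h^j`
      (∀ h : HahnSeries Γ ℝ, (∀ γ ∈ h.support, 0 < γ) →
        ∃ S : HahnSeries.SummableFamily Γ ℝ ℕ,
          (∀ j : ℕ, S j = (((-1 : ℝ) ^ j / (j + 1 : ℝ)) • h ^ (j + 1))) ∧
          L h = S.hsum) ∧
      -- defining formula for `log`
      (∀ a : ℝ, ∀ h : HahnSeries Γ ℝ, 0 < a → (∀ γ ∈ h.support, 0 < γ) →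
        log (HahnSeries.C a * (1 + h)) = HahnSeries.C (Real.log a) + L h) ∧
      -- `log` extends the real logarithm
      (∀ a : ℝ, 0 < a → log (HahnSeries.C a) = HahnSeries.C (Real.log a)) ∧
      -- `log` is a group homomorphism on the positive units of `O_𝓡`
      (∀ f g : HahnSeries Γ ℝ,
        (∃ a h, 0 < a ∧ (∀ γ ∈ h.support, 0 < γ) ∧ f = HahnSeries.C a + h) →
        (∃ a h, 0 < a ∧ (∀ γ ∈ h.support, 0 < γ) ∧ g = HahnSeries.C a + h) →
        log (f * g) = log f + log g) ∧
      -- `log` is a bijection from the positive units of `O_𝓡` onto `O_𝓡`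
      Set.BijOn log
        {f : HahnSeries Γ ℝ |
          ∃ a h, 0 < a ∧ (∀ γ ∈ h.support, 0 < γ) ∧ f = HahnSeries.C a + h}
        {g : HahnSeries Γ ℝ | ∀ γ ∈ g.support, 0 ≤ γ} := by
  have hpos {h : HahnSeries Γ ℝ} (hh : ∀ γ ∈ h.support, 0 < γ) : 0 < h.orderTop :=
    HahnSeries.zero_lt_orderTop_iff_forall_mem_support.2 hh
  refine ⟨HahnSeries.logOneAdd, HahnSeries.logPosUnit, fun h hh => ?_,
    fun a h ha hh => HahnSeries.logPosUnit_C_mul_one_add ha.ne' (hpos hh), fun a ha => ?_,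
    fun _ _ => HahnSeries.logPosUnit_mul, HahnSeries.bijOn_logPosUnit⟩
  · refine ⟨HahnSeries.logFamily h, fun j => ?_, (HahnSeries.hsum_logFamily (hpos hh)).symm⟩
    rw [HahnSeries.logFamily_apply (hpos hh), coeff_succ_log]
    congr 1
    simp
  · simpa using HahnSeries.logPosUnit_C_mul_one_add (Γ := Γ) ha.ne' (h := 0) (by simp)

/-- Let `Γ` be a divisible ordered abelian group and `𝓡 = ℝ((t^Γ))`. The
logarithmic series `L(x) = Σ_{j≥1} (-1)^{j+1} x^j / j` converges (is a
well-defined Hahn series, the sum of a summable family) when evaluated at any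
infinitesimal `h` (series with support in `Γ_{>0}`), and the map
`log : ℝ_{>0} + m_𝓡 → O_𝓡` defined by `log (a(1+h)) = log a + L h` is a group
isomorphism from the multiplicative group of positive units of `O_𝓡` (the
elements of `ℝ_{>0} + m_𝓡`) onto the additive group `(O_𝓡, +)` (the series
with support in `Γ_{≥0}`), extending the real logarithm. -/
theorem stmt_12 (Γ : Type*) [AddCommGroup Γ] [LinearOrder Γ] [IsOrderedAddMonoid Γ]
    (hdiv : ∀ γ : Γ, ∀ n : ℕ, 1 ≤ n → ∃ δ : Γ, n • δ = γ) :
    ∃ L log : HahnSeries Γ ℝ → HahnSeries Γ ℝ,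
      -- the logarithmic series is summable at infinitesimal arguments and `L`
      -- is its sum: the `j`-th term (for `j ≥ 1`, here indexed by `j+1`) is
      -- `((-1)^(j+1)/j) • h^j`
      (∀ h : HahnSeries Γ ℝ, (∀ γ ∈ h.support, 0 < γ) →
        ∃ S : HahnSeries.SummableFamily Γ ℝ ℕ,
          (∀ j : ℕ, S j = (((-1 : ℝ) ^ j / (j + 1 : ℝ)) • h ^ (j + 1))) ∧
          L h = S.hsum) ∧
      -- defining formula for `log`
      (∀ a : ℝ, ∀ h : HahnSeries Γ ℝ, 0 < a → (∀ γ ∈ h.support, 0 < γ) →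
        log (HahnSeries.C a * (1 + h)) = HahnSeries.C (Real.log a) + L h) ∧
      -- `log` extends the real logarithm
      (∀ a : ℝ, 0 < a → log (HahnSeries.C a) = HahnSeries.C (Real.log a)) ∧
      -- `log` is a group homomorphism on the positive units of `O_𝓡`
      (∀ f g : HahnSeries Γ ℝ,
        (∃ a h, 0 < a ∧ (∀ γ ∈ h.support, 0 < γ) ∧ f = HahnSeries.C a + h) →
        (∃ a h, 0 < a ∧ (∀ γ ∈ h.support, 0 < γ) ∧ g = HahnSeries.C a + h) →
        log (f * g) = log f + log g) ∧
      -- `log` is a bijection from the positive units of `O_𝓡` onto `O_𝓡`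
      Set.BijOn log
        {f : HahnSeries Γ ℝ |
          ∃ a h, 0 < a ∧ (∀ γ ∈ h.support, 0 < γ) ∧ f = HahnSeries.C a + h}
        {g : HahnSeries Γ ℝ | ∀ γ ∈ g.support, 0 ≤ γ} :=
  stmt_12_general Γ
end

section
/- Let Γ be an archimedean ordered abelian group with Γ ≅ ℚ (as ordered groups), viewed as a subgroup of ℝ. Then there exists r ∈ ℝ_{>0} such that Γ = rℚ := { rq : q ∈ ℚ }. -/
theorem AddMonoidHom.map_rat_eq_mul_map_one {K : Type*} [Field K] [CharZero K] (f : ℚ →+ K)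
    (q : ℚ) : f q = f 1 * q := by
  simpa [Rat.smul_def, mul_comm] using map_rat_smul f q 1

theorem AddMonoidHom.range_rat_eq {K : Type*} [Field K] [CharZero K] (f : ℚ →+ K) :
    Set.range f = {x : K | ∃ q : ℚ, x = f 1 * q} := by
  ext x
  exact exists_congr fun q => by rw [f.map_rat_eq_mul_map_one, eq_comm]

theorem AddSubgroup.coe_eq_range_of_addEquiv {G H : Type*} [AddGroup G] [AddGroup H]
    (Γ : AddSubgroup G) (e : H ≃+ Γ) :
    (Γ : Set G) = Set.range (Γ.subtype.comp e.toAddMonoidHom) := by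
  ext x
  constructor
  · intro hx
    exact ⟨e.symm ⟨x, hx⟩, by simp⟩
  · rintro ⟨y, rfl⟩
    exact (e y).2

/-- Let `Γ` be a subgroup of `(ℝ, +)` that is order-isomorphic to `ℚ` (as
ordered groups). Then there exists `r ∈ ℝ_{>0}` such that
`Γ = rℚ = { r * q : q ∈ ℚ }`. -/
theorem stmt_16 (Γ : AddSubgroup ℝ) (e : Γ ≃+ ℚ) (he : StrictMono e) :
    ∃ r : ℝ, 0 < r ∧ (Γ : Set ℝ) = {x : ℝ | ∃ q : ℚ, x = r * q} := by
  set f : ℚ →+ ℝ := Γ.subtype.comp e.symm.toAddMonoidHom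
  have hf_one : (0 : Γ) < e.symm 1 := by
    rw [← he.lt_iff_lt]
    simp
  exact ⟨f 1, hf_one, (Γ.coe_eq_range_of_addEquiv e.symm).trans f.range_rat_eq⟩
end
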